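/- Fix Q > 0, ξ′ ∈ (0,1) and q₊ ∈ ℝ. For m₁, m₂ > 0 define x̂ = ξ′Q²/(Q² + (m₁+m₂)²), ŝ = Q²(1/x̂ − 1), ζ₁ = 1 + (m₂²−m₁²)/ŝ, ζ₂ = Δ(ŝ, m₂², m₁²)/ŝ, ζ± = (ζ₁±ζ₂)/2, and the massive boson–gluon-fusion F₅ Wilson coefficient H₅(m₁,m₂) = A₅(ζ₊−ζ₋)/((1−ζ₊)(1−ζ₋)) + B₅(ζ₊−ζ₋)/(ζ₊ζ₋) + C₅·ln((1−ζ₋)/(1−ζ₊)) + D₅·ln(ζ₊/ζ₋) + E₅·(ζ₊−ζ₋), where A₅ = q₊ x̂² (m₁²/Q²)(1 + (m₂² − 3m₁²)/Q²), B₅ = q₊ x̂² (m₂²/Q²)(1 + (m₁² − 3m₂²)/Q²), C₅ = 2q₊( m₁⁴x̂²/(2Q⁴) − 3m₂²m₁²x̂²/Q⁴ + m₂⁴x̂²/(2Q⁴) + m₁²(3−8x̂)x̂/(2Q²) + m₂²x̂(2x̂−1)/(2Q²) + (2(x̂−1)x̂+1)/4 ), D₅ = C₅ with m₁ and m₂ interchanged,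 and E₅ = −q₊(6x̂² − 6x̂ + 1). Let P_qg(ξ′) = ½((1−ξ′)² + ξ′²). Then the subtracted coefficient H₅(m₁,m₂) − q₊ P_qg(ξ′)·( ln(Q²/m₁²) + ln(Q²/m₂²) ) converges as (m₁,m₂) → (0⁺,0⁺), and its limit equals q₊·( −1 + 8ξ′(1−ξ′) + ((1−ξ′)² + ξ′²)·ln((1−ξ′)/ξ′) ), i.e. q₊ times the massless MS-bar gluon coefficient function C_{G,5}^{(1)}(ξ′). -/

import Mathlib

open Filter Set

/-- The triangle (Källén) function `Δ(a,b,c) = √(a²+b²+c²−2ab−2ac−2bc)`. -/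
noncomputable def triangleFn (a b c : ℝ) : ℝ :=
  Real.sqrt (a ^ 2 + b ^ 2 + c ^ 2 - 2 * a * b - 2 * a * c - 2 * b * c)

/-- The `C₅` coefficient of the boson–gluon-fusion `F₅` decomposition
(`D₅` is obtained by interchanging `m₁` and `m₂`). -/
noncomputable def C5gf (Q qp xh m₁ m₂ : ℝ) : ℝ :=
  2 * qp * (m₁ ^ 4 * xh ^ 2 / (2 * Q ^ 4) - 3 * m₂ ^ 2 * m₁ ^ 2 * xh ^ 2 / Q ^ 4
    + m₂ ^ 4 * xh ^ 2 / (2 * Q ^ 4) + m₁ ^ 2 * (3 - 8 * xh) * xh / (2 * Q ^ 2)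
    + m₂ ^ 2 * xh * (2 * xh - 1) / (2 * Q ^ 2) + (2 * (xh - 1) * xh + 1) / 4)

/-- The massive boson–gluon-fusion `F₅` Wilson coefficient. -/
noncomputable def H5gf (Q ξ' qp m₁ m₂ : ℝ) : ℝ :=
  let xh := ξ' * Q ^ 2 / (Q ^ 2 + (m₁ + m₂) ^ 2)
  let sh := Q ^ 2 * (1 / xh - 1)
  let ζ₁ := 1 + (m₂ ^ 2 - m₁ ^ 2) / sh
  let ζ₂ := triangleFn sh (m₂ ^ 2) (m₁ ^ 2) / sh
  let ζp := (ζ₁ + ζ₂) / 2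
  let ζm := (ζ₁ - ζ₂) / 2
  let A₅ := qp * xh ^ 2 * (m₁ ^ 2 / Q ^ 2) * (1 + (m₂ ^ 2 - 3 * m₁ ^ 2) / Q ^ 2)
  let B₅ := qp * xh ^ 2 * (m₂ ^ 2 / Q ^ 2) * (1 + (m₁ ^ 2 - 3 * m₂ ^ 2) / Q ^ 2)
  let C₅ := C5gf Q qp xh m₁ m₂
  let D₅ := C5gf Q qp xh m₂ m₁
  let E₅ := -qp * (6 * xh ^ 2 - 6 * xh + 1)
  A₅ * (ζp - ζm) / ((1 - ζp) * (1 - ζm)) + B₅ * (ζp - ζm) / (ζp * ζm)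
    + C₅ * Real.log ((1 - ζm) / (1 - ζp)) + D₅ * Real.log (ζp / ζm)
    + E₅ * (ζp - ζm)

/-- The leading-order gluon-to-quark splitting function `P_qg(ξ′) = ½((1−ξ′)²+ξ′²)`. -/
noncomputable def Pqg (ξ' : ℝ) : ℝ := (1 / 2) * ((1 - ξ') ^ 2 + ξ' ^ 2)

noncomputable def Ggf (Q s a b : ℝ) : ℝ :=
  (8 * s * b ^ 3 + 32 * s * a * b ^ 2 + 40 * s * a ^ 2 * b + 16 * s * a ^ 3
    - 16 * s ^ 2 * b ^ 3 - 48 * s ^ 2 * a * b ^ 2 - 16 * s ^ 2 * a ^ 2 * b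
    + 8 * Q ^ 2 * s * b + 16 * Q ^ 2 * s * a - 16 * Q ^ 2 * s ^ 2 * b
    - 40 * Q ^ 2 * s ^ 2 * a) / (4 * (Q ^ 2 + (a + b) ^ 2) ^ 2)

lemma C5gf_sub (Q qp s a b x : ℝ) (hQ : Q ≠ 0)
    (hx : x = s * Q ^ 2 / (Q ^ 2 + (a + b) ^ 2)) :
    C5gf Q qp x a b = qp * Pqg s + qp * (a * Ggf Q s a b) := by
  have hN : Q ^ 2 + (a + b) ^ 2 ≠ 0 := by positivity
  subst hx
  unfold C5gf Pqg Ggf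
  field_simp
  ring

noncomputable def PhiF (Q ξ' qp m₁ m₂ : ℝ) : ℝ :=
  let xh := ξ' * Q ^ 2 / (Q ^ 2 + (m₁ + m₂) ^ 2)
  let sh := Q ^ 2 * (1 / xh - 1)
  let ζ₁ := 1 + (m₂ ^ 2 - m₁ ^ 2) / sh
  let ζ₂ := triangleFn sh (m₂ ^ 2) (m₁ ^ 2) / sh
  let ζp := (ζ₁ + ζ₂) / 2
  let ζm := (ζ₁ - ζ₂) / 2
  qp * xh ^ 2 * ζ₂ * (sh / Q ^ 2) * (1 + (m₂ ^ 2 - 3 * m₁ ^ 2) / Q ^ 2)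
  + qp * xh ^ 2 * ζ₂ * (sh / Q ^ 2) * (1 + (m₁ ^ 2 - 3 * m₂ ^ 2) / Q ^ 2)
  + C5gf Q qp xh m₁ m₂ * (2 * Real.log (1 - ζm) + Real.log (sh / Q ^ 2))
  + C5gf Q qp xh m₂ m₁ * (2 * Real.log ζp + Real.log (sh / Q ^ 2))
  + qp * Ggf Q ξ' m₁ m₂ * (m₁ * Real.log (Q ^ 2 / m₁ ^ 2))
  + qp * Ggf Q ξ' m₂ m₁ * (m₂ * Real.log (Q ^ 2 / m₂ ^ 2))
  + (-qp * (6 * xh ^ 2 - 6 * xh + 1)) * ζ₂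

set_option maxHeartbeats 1000000 in
lemma pointwise_eq (Q ξ' qp m₁ m₂ : ℝ) (hQ : 0 < Q) (h0 : 0 < ξ') (h1 : ξ' < 1)
    (hm₁ : 0 < m₁) (hm₂ : 0 < m₂) :
    H5gf Q ξ' qp m₁ m₂
      - qp * Pqg ξ' * (Real.log (Q ^ 2 / m₁ ^ 2) + Real.log (Q ^ 2 / m₂ ^ 2))
      = PhiF Q ξ' qp m₁ m₂ := by
  have hQ2 : (0:ℝ) < Q ^ 2 := by positivity
  have hN : (0:ℝ) < Q ^ 2 + (m₁ + m₂) ^ 2 := by positivity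
  unfold H5gf PhiF
  dsimp only
  set x := ξ' * Q ^ 2 / (Q ^ 2 + (m₁ + m₂) ^ 2) with hxdef
  have hxpos : 0 < x := by positivity
  set sh := Q ^ 2 * (1 / x - 1) with hshdef
  have hsh : sh = (Q ^ 2 * (1 - ξ') + (m₁ + m₂) ^ 2) / ξ' := by
    rw [hshdef, hxdef]; field_simp; ring
  have hgap : (m₁ + m₂) ^ 2 < sh := by
    rw [hsh]
    rw [lt_div_iff₀ h0]
    nlinarith [sq_nonneg (m₁ + m₂)]
  have hshpos : 0 < sh := lt_trans (by positivity) hgap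
  have hshne : sh ≠ 0 := ne_of_gt hshpos
  have hm1lt : m₁ ^ 2 < sh := lt_of_le_of_lt (by nlinarith) hgap
  have hm2lt : m₂ ^ 2 < sh := lt_of_le_of_lt (by nlinarith) hgap
  set D := sh ^ 2 + (m₂ ^ 2) ^ 2 + (m₁ ^ 2) ^ 2 - 2 * sh * m₂ ^ 2 - 2 * sh * m₁ ^ 2
      - 2 * m₂ ^ 2 * m₁ ^ 2 with hDdef
  have hDpos : 0 < D := by
    have hfac : D = (sh - (m₁ + m₂) ^ 2) * (sh - (m₁ - m₂) ^ 2) := by rw [hDdef]; ring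
    rw [hfac]
    have h2 : (m₁ - m₂) ^ 2 < sh := by nlinarith
    exact mul_pos (by linarith) (by linarith)
  set r := triangleFn sh (m₂ ^ 2) (m₁ ^ 2) with hrdef
  have hr2 : r ^ 2 = D := by
    rw [hrdef, triangleFn, ← hDdef, Real.sq_sqrt hDpos.le]
  have hrpos : 0 < r := by
    rw [hrdef, triangleFn, ← hDdef]; exact Real.sqrt_pos.mpr hDpos
  set ζ₁ := 1 + (m₂ ^ 2 - m₁ ^ 2) / sh with hζ₁def
  set ζp := (ζ₁ + r / sh) / 2 with hζpdef
  set ζm := (ζ₁ - r / sh) / 2 with hζmdef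
  clear_value x sh D r ζ₁ ζp ζm
  have hζ₁pos : 0 < ζ₁ := by
    rw [hζ₁def]
    have h' : 0 < (sh + (m₂ ^ 2 - m₁ ^ 2)) / sh := div_pos (by nlinarith) hshpos
    have e : (sh + (m₂ ^ 2 - m₁ ^ 2)) / sh = 1 + (m₂ ^ 2 - m₁ ^ 2) / sh := by
      field_simp
    linarith [e ▸ h']
  have hζppos : 0 < ζp := by
    rw [hζpdef]
    have := div_pos hrpos hshpos
    linarith
  have hprod2' : ζp * ζm * sh = m₂ ^ 2 := by
    have e : ζp * ζm * sh = (ζ₁ ^ 2 * sh ^ 2 - r ^ 2) / (4 * sh) := by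
      rw [hζpdef, hζmdef]; field_simp; ring
    rw [e, hr2, hDdef, hζ₁def]; field_simp; ring
  have hprod2 : ζp * ζm = m₂ ^ 2 / sh := by
    rw [eq_div_iff hshne]; exact hprod2'
  have hprod1' : (1 - ζp) * (1 - ζm) * sh = m₁ ^ 2 := by
    have e : (1 - ζp) * (1 - ζm) * sh = (1 - ζ₁) * sh + (ζ₁ ^ 2 * sh ^ 2 - r ^ 2) / (4 * sh) := by
      rw [hζpdef, hζmdef]; field_simp; ring
    rw [e, hr2, hDdef, hζ₁def]; field_simp; ring
  have hprod1 : (1 - ζp) * (1 - ζm) = m₁ ^ 2 / sh := by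
    rw [eq_div_iff hshne]; exact hprod1'
  have hζmpos : 0 < ζm := by
    have h' : 0 < ζp * ζm := by
      rw [hprod2]; exact div_pos (by positivity) hshpos
    rcases mul_pos_iff.mp h' with h | h
    · exact h.2
    · exfalso; linarith [h.1]
  have hsum2 : (1 - ζp) + (1 - ζm) = (sh + (m₁ ^ 2 - m₂ ^ 2)) / sh := by
    rw [hζpdef, hζmdef, hζ₁def]; field_simp; ring
  have hsumpos : 0 < (1 - ζp) + (1 - ζm) := by
    rw [hsum2]; exact div_pos (by nlinarith) hshpos
  have h1mp : 0 < 1 - ζp ∧ 0 < 1 - ζm := by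
    have h' : 0 < (1 - ζp) * (1 - ζm) := by
      rw [hprod1]; exact div_pos (by positivity) hshpos
    rcases mul_pos_iff.mp h' with h | h
    · exact ⟨h.1, h.2⟩
    · exfalso; linarith [h.1, h.2]
  obtain ⟨h1mζp, h1mζm⟩ := h1mp
  -- log identities
  have hlog1 : Real.log ((1 - ζm) / (1 - ζp))
      = 2 * Real.log (1 - ζm) + Real.log (sh / Q ^ 2) + Real.log (Q ^ 2 / m₁ ^ 2) := by
    have harg : (1 - ζm) / (1 - ζp) = (1 - ζm) ^ 2 * (sh / Q ^ 2) * (Q ^ 2 / m₁ ^ 2) := by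
      rw [div_eq_iff (ne_of_gt h1mζp)]
      have hQne : Q ^ 2 ≠ 0 := ne_of_gt hQ2
      have hm₁ne : m₁ ^ 2 ≠ 0 := by positivity
      field_simp
      linear_combination (-1) * hprod1'
    rw [harg, Real.log_mul (by positivity) (by positivity),
      Real.log_mul (pow_ne_zero 2 (ne_of_gt h1mζm)) (by positivity), Real.log_pow]
    push_cast; ring
  have hlog2 : Real.log (ζp / ζm)
      = 2 * Real.log ζp + Real.log (sh / Q ^ 2) + Real.log (Q ^ 2 / m₂ ^ 2) := by
    have harg : ζp / ζm = ζp ^ 2 * (sh / Q ^ 2) * (Q ^ 2 / m₂ ^ 2) := by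
      rw [div_eq_iff (ne_of_gt hζmpos)]
      have hQne : Q ^ 2 ≠ 0 := ne_of_gt hQ2
      have hm₂ne : m₂ ^ 2 ≠ 0 := by positivity
      field_simp
      linear_combination (-1) * hprod2'
    rw [harg, Real.log_mul (by positivity) (by positivity),
      Real.log_mul (pow_ne_zero 2 (ne_of_gt hζppos)) (by positivity), Real.log_pow]
    push_cast; ring
  have hdiff : ζp - ζm = r / sh := by rw [hζpdef, hζmdef]; ring
  have hC : C5gf Q qp x m₁ m₂ = qp * Pqg ξ' + qp * (m₁ * Ggf Q ξ' m₁ m₂) :=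
    C5gf_sub Q qp ξ' m₁ m₂ x (ne_of_gt hQ) hxdef
  have hD2 : C5gf Q qp x m₂ m₁ = qp * Pqg ξ' + qp * (m₂ * Ggf Q ξ' m₂ m₁) :=
    C5gf_sub Q qp ξ' m₂ m₁ x (ne_of_gt hQ) (by rw [hxdef]; ring_nf)
  rw [hdiff, hprod1, hprod2, hlog1, hlog2, hC, hD2]
  have hm₁ne : m₁ ≠ 0 := ne_of_gt hm₁
  have hm₂ne : m₂ ≠ 0 := ne_of_gt hm₂
  have hQne : Q ≠ 0 := ne_of_gt hQ
  field_simp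
  ring

lemma C5gf_zero (Q qp ξ' : ℝ) : C5gf Q qp ξ' 0 0 = qp * Pqg ξ' := by
  unfold C5gf Pqg; norm_num; ring

set_option maxHeartbeats 1000000 in
lemma tendsto_PhiF (Q ξ' qp : ℝ) (hQ : 0 < Q) (h0 : 0 < ξ') (h1 : ξ' < 1) :
    Tendsto (fun m : ℝ × ℝ => PhiF Q ξ' qp m.1 m.2)
      (nhdsWithin (0, 0) (Set.Ioi 0 ×ˢ Set.Ioi 0))
      (nhds (qp * (-1 + 8 * ξ' * (1 - ξ')
        + ((1 - ξ') ^ 2 + ξ' ^ 2) * Real.log ((1 - ξ') / ξ')))) := by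
  have hQ2 : (0:ℝ) < Q ^ 2 := by positivity
  have hQ2ne : (Q:ℝ) ^ 2 ≠ 0 := ne_of_gt hQ2
  have h0ne : ξ' ≠ 0 := ne_of_gt h0
  set f := nhdsWithin ((0,0) : ℝ × ℝ) (Set.Ioi 0 ×ˢ Set.Ioi 0) with hfdef
  set s₀ : ℝ := Q ^ 2 * (1 / ξ' - 1) with hs₀
  have hs₀pos : 0 < s₀ := by
    rw [hs₀]
    apply mul_pos hQ2
    have : 1 < 1 / ξ' := by rw [lt_div_iff₀ h0]; linarith
    linarith
  have hs₀ne : s₀ ≠ 0 := ne_of_gt hs₀pos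
  have hratio : s₀ / Q ^ 2 = (1 - ξ') / ξ' := by rw [hs₀]; field_simp
  have hf : f = (nhdsWithin (0:ℝ) (Ioi 0)) ×ˢ (nhdsWithin (0:ℝ) (Ioi 0)) := by
    rw [hfdef, nhdsWithin_prod_eq]
  have hm1' : Tendsto (fun m : ℝ × ℝ => m.1) f (nhdsWithin (0:ℝ) (Ioi 0)) := by
    rw [hf]; exact tendsto_fst
  have hm2' : Tendsto (fun m : ℝ × ℝ => m.2) f (nhdsWithin (0:ℝ) (Ioi 0)) := by
    rw [hf]; exact tendsto_snd
  have hm1 : Tendsto (fun m : ℝ × ℝ => m.1) f (nhds 0) := hm1'.mono_right nhdsWithin_le_nhds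
  have hm2 : Tendsto (fun m : ℝ × ℝ => m.2) f (nhds 0) := hm2'.mono_right nhdsWithin_le_nhds
  -- xh
  have hden : Tendsto (fun m : ℝ × ℝ => Q ^ 2 + (m.1 + m.2) ^ 2) f (nhds (Q ^ 2)) := by
    have h : Tendsto (fun m : ℝ × ℝ => Q ^ 2 + (m.1 + m.2) ^ 2) f (nhds (Q ^ 2 + ((0:ℝ) + 0) ^ 2)) :=
      tendsto_const_nhds.add ((hm1.add hm2).pow 2)
    simpa using h
  have hxh : Tendsto (fun m : ℝ × ℝ => ξ' * Q ^ 2 / (Q ^ 2 + (m.1 + m.2) ^ 2)) f (nhds ξ') := by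
    have h : Tendsto (fun m : ℝ × ℝ => ξ' * Q ^ 2 / (Q ^ 2 + (m.1 + m.2) ^ 2)) f (nhds (ξ' * Q ^ 2 / Q ^ 2)) :=
      tendsto_const_nhds.div hden hQ2ne
    have e : ξ' * Q ^ 2 / Q ^ 2 = ξ' := by field_simp
    rwa [e] at h
  -- sh
  have hsh : Tendsto (fun m : ℝ × ℝ =>
      Q ^ 2 * (1 / (ξ' * Q ^ 2 / (Q ^ 2 + (m.1 + m.2) ^ 2)) - 1)) f (nhds s₀) := by
    exact tendsto_const_nhds.mul ((tendsto_const_nhds.div hxh h0ne).sub tendsto_const_nhds)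
  -- triangle function and ζ₂
  have harg : Tendsto (fun m : ℝ × ℝ =>
      (Q ^ 2 * (1 / (ξ' * Q ^ 2 / (Q ^ 2 + (m.1 + m.2) ^ 2)) - 1)) ^ 2
      + (m.2 ^ 2) ^ 2 + (m.1 ^ 2) ^ 2
      - 2 * (Q ^ 2 * (1 / (ξ' * Q ^ 2 / (Q ^ 2 + (m.1 + m.2) ^ 2)) - 1)) * m.2 ^ 2
      - 2 * (Q ^ 2 * (1 / (ξ' * Q ^ 2 / (Q ^ 2 + (m.1 + m.2) ^ 2)) - 1)) * m.1 ^ 2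
      - 2 * m.2 ^ 2 * m.1 ^ 2) f (nhds (s₀ ^ 2)) := by
    have h : Tendsto _ f (nhds (s₀ ^ 2 + ((0:ℝ) ^ 2) ^ 2 + ((0:ℝ) ^ 2) ^ 2
        - 2 * s₀ * (0:ℝ) ^ 2 - 2 * s₀ * (0:ℝ) ^ 2 - 2 * (0:ℝ) ^ 2 * (0:ℝ) ^ 2)) :=
      (((((hsh.pow 2).add ((hm2.pow 2).pow 2)).add ((hm1.pow 2).pow 2)).sub
        ((tendsto_const_nhds.mul hsh).mul (hm2.pow 2))).sub
        ((tendsto_const_nhds.mul hsh).mul (hm1.pow 2))).sub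
        ((tendsto_const_nhds.mul (hm2.pow 2)).mul (hm1.pow 2))
    simpa using h
  have hr : Tendsto (fun m : ℝ × ℝ =>
      triangleFn (Q ^ 2 * (1 / (ξ' * Q ^ 2 / (Q ^ 2 + (m.1 + m.2) ^ 2)) - 1))
        (m.2 ^ 2) (m.1 ^ 2)) f (nhds s₀) := by
    unfold triangleFn
    have h := (Real.continuous_sqrt.tendsto (s₀ ^ 2)).comp harg
    rwa [Real.sqrt_sq hs₀pos.le] at h
  have hζ₂ : Tendsto (fun m : ℝ × ℝ =>
      triangleFn (Q ^ 2 * (1 / (ξ' * Q ^ 2 / (Q ^ 2 + (m.1 + m.2) ^ 2)) - 1))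
        (m.2 ^ 2) (m.1 ^ 2) / (Q ^ 2 * (1 / (ξ' * Q ^ 2 / (Q ^ 2 + (m.1 + m.2) ^ 2)) - 1)))
      f (nhds 1) := by
    have h := hr.div hsh hs₀ne
    rwa [div_self hs₀ne] at h
  -- ζ₁, ζp, ζm
  have hζ₁ : Tendsto (fun m : ℝ × ℝ =>
      1 + (m.2 ^ 2 - m.1 ^ 2) / (Q ^ 2 * (1 / (ξ' * Q ^ 2 / (Q ^ 2 + (m.1 + m.2) ^ 2)) - 1)))
      f (nhds 1) := by
    have h : Tendsto _ f (nhds ((1:ℝ) + ((0:ℝ) ^ 2 - (0:ℝ) ^ 2) / s₀)) :=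
      tendsto_const_nhds.add (((hm2.pow 2).sub (hm1.pow 2)).div hsh hs₀ne)
    simpa using h
  have hζp : Tendsto (fun m : ℝ × ℝ =>
      ((1 + (m.2 ^ 2 - m.1 ^ 2) / (Q ^ 2 * (1 / (ξ' * Q ^ 2 / (Q ^ 2 + (m.1 + m.2) ^ 2)) - 1)))
        + triangleFn (Q ^ 2 * (1 / (ξ' * Q ^ 2 / (Q ^ 2 + (m.1 + m.2) ^ 2)) - 1))
            (m.2 ^ 2) (m.1 ^ 2) / (Q ^ 2 * (1 / (ξ' * Q ^ 2 / (Q ^ 2 + (m.1 + m.2) ^ 2)) - 1))) / 2)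
      f (nhds 1) := by
    have h := (hζ₁.add hζ₂).div_const (2:ℝ)
    rw [show ((1:ℝ) + 1) / 2 = 1 from by norm_num] at h
    exact h
  have hζm : Tendsto (fun m : ℝ × ℝ =>
      ((1 + (m.2 ^ 2 - m.1 ^ 2) / (Q ^ 2 * (1 / (ξ' * Q ^ 2 / (Q ^ 2 + (m.1 + m.2) ^ 2)) - 1)))
        - triangleFn (Q ^ 2 * (1 / (ξ' * Q ^ 2 / (Q ^ 2 + (m.1 + m.2) ^ 2)) - 1))
            (m.2 ^ 2) (m.1 ^ 2) / (Q ^ 2 * (1 / (ξ' * Q ^ 2 / (Q ^ 2 + (m.1 + m.2) ^ 2)) - 1))) / 2)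
      f (nhds 0) := by
    have h := (hζ₁.sub hζ₂).div_const (2:ℝ)
    rw [show ((1:ℝ) - 1) / 2 = 0 from by norm_num] at h
    exact h
  -- logs
  have hlog1m : Tendsto (fun m : ℝ × ℝ => Real.log (1 -
      ((1 + (m.2 ^ 2 - m.1 ^ 2) / (Q ^ 2 * (1 / (ξ' * Q ^ 2 / (Q ^ 2 + (m.1 + m.2) ^ 2)) - 1)))
        - triangleFn (Q ^ 2 * (1 / (ξ' * Q ^ 2 / (Q ^ 2 + (m.1 + m.2) ^ 2)) - 1))
            (m.2 ^ 2) (m.1 ^ 2) / (Q ^ 2 * (1 / (ξ' * Q ^ 2 / (Q ^ 2 + (m.1 + m.2) ^ 2)) - 1))) / 2))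
      f (nhds 0) := by
    have h1 : Tendsto (fun m : ℝ × ℝ => 1 - _) f (nhds ((1:ℝ) - 0)) := tendsto_const_nhds.sub hζm
    have h := ((Real.continuousAt_log (by norm_num : (1:ℝ) - 0 ≠ 0)).tendsto).comp h1
    simpa [Function.comp_def] using h
  have hlogp : Tendsto (fun m : ℝ × ℝ => Real.log
      (((1 + (m.2 ^ 2 - m.1 ^ 2) / (Q ^ 2 * (1 / (ξ' * Q ^ 2 / (Q ^ 2 + (m.1 + m.2) ^ 2)) - 1)))
        + triangleFn (Q ^ 2 * (1 / (ξ' * Q ^ 2 / (Q ^ 2 + (m.1 + m.2) ^ 2)) - 1))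
            (m.2 ^ 2) (m.1 ^ 2) / (Q ^ 2 * (1 / (ξ' * Q ^ 2 / (Q ^ 2 + (m.1 + m.2) ^ 2)) - 1))) / 2))
      f (nhds 0) := by
    have h := ((Real.continuousAt_log (by norm_num : (1:ℝ) ≠ 0)).tendsto).comp hζp
    simpa [Function.comp_def] using h
  have hlogsh : Tendsto (fun m : ℝ × ℝ => Real.log
      (Q ^ 2 * (1 / (ξ' * Q ^ 2 / (Q ^ 2 + (m.1 + m.2) ^ 2)) - 1) / Q ^ 2))
      f (nhds (Real.log ((1 - ξ') / ξ'))) := by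
    have h0' : s₀ / Q ^ 2 ≠ 0 := by positivity
    have h := ((Real.continuousAt_log h0').tendsto).comp (hsh.div_const (Q ^ 2))
    rwa [hratio] at h
  -- C5gf limits
  have hC5cont : Continuous (fun p : ℝ × ℝ × ℝ => C5gf Q qp p.1 p.2.1 p.2.2) := by
    unfold C5gf; fun_prop
  have hC5a : Tendsto (fun m : ℝ × ℝ =>
      C5gf Q qp (ξ' * Q ^ 2 / (Q ^ 2 + (m.1 + m.2) ^ 2)) m.1 m.2) f (nhds (qp * Pqg ξ')) := by
    have h := (hC5cont.tendsto (ξ', 0, 0)).comp (hxh.prodMk_nhds (hm1.prodMk_nhds hm2))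
    simpa [C5gf_zero, Function.comp_def] using h
  have hC5b : Tendsto (fun m : ℝ × ℝ =>
      C5gf Q qp (ξ' * Q ^ 2 / (Q ^ 2 + (m.1 + m.2) ^ 2)) m.2 m.1) f (nhds (qp * Pqg ξ')) := by
    have h := (hC5cont.tendsto (ξ', 0, 0)).comp (hxh.prodMk_nhds (hm2.prodMk_nhds hm1))
    simpa [C5gf_zero, Function.comp_def] using h
  -- Ggf limits
  have hGcont : ∀ z : ℝ × ℝ, ContinuousAt (fun m : ℝ × ℝ => Ggf Q ξ' m.1 m.2) z → True := fun _ _ => trivial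
  have hG1 : Tendsto (fun m : ℝ × ℝ => Ggf Q ξ' m.1 m.2) f (nhds (Ggf Q ξ' 0 0)) := by
    have hc : ContinuousAt (fun m : ℝ × ℝ => Ggf Q ξ' m.1 m.2) (0, 0) := by
      unfold Ggf
      apply ContinuousAt.div
      · fun_prop
      · fun_prop
      · simp only [Prod.fst, Prod.snd]
        norm_num
        exact ne_of_gt hQ
    exact hc.tendsto.mono_left nhdsWithin_le_nhds
  have hG2 : Tendsto (fun m : ℝ × ℝ => Ggf Q ξ' m.2 m.1) f (nhds (Ggf Q ξ' 0 0)) := by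
    have hc : ContinuousAt (fun m : ℝ × ℝ => Ggf Q ξ' m.2 m.1) (0, 0) := by
      unfold Ggf
      apply ContinuousAt.div
      · fun_prop
      · fun_prop
      · simp only [Prod.fst, Prod.snd]
        norm_num
        exact ne_of_gt hQ
    exact hc.tendsto.mono_left nhdsWithin_le_nhds
  -- mass * log term
  have hlog0 : Tendsto (fun t : ℝ => t * Real.log (Q ^ 2 / t ^ 2))
      (nhdsWithin (0:ℝ) (Ioi 0)) (nhds 0) := by
    have ha : Tendsto (fun t : ℝ => t * Real.log (Q ^ 2)) (nhdsWithin (0:ℝ) (Ioi 0)) (nhds 0) := by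
      have h : Tendsto (fun t : ℝ => t * Real.log (Q ^ 2))
          (nhdsWithin (0:ℝ) (Ioi 0)) (nhds (0 * Real.log (Q ^ 2))) :=
        (tendsto_id.mono_left nhdsWithin_le_nhds).mul_const _
      simpa using h
    have hb := tendsto_log_mul_rpow_nhdsGT_zero zero_lt_one
    simp only [Real.rpow_one] at hb
    have h1 : Tendsto (fun t : ℝ => t * Real.log (Q ^ 2) - 2 * (Real.log t * t))
        (nhdsWithin (0:ℝ) (Ioi 0)) (nhds 0) := by
      have h := ha.sub (hb.const_mul (2:ℝ))
      simpa using h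
    apply h1.congr'
    filter_upwards [self_mem_nhdsWithin] with t ht
    have ht' : (0:ℝ) < t := ht
    rw [Real.log_div hQ2ne (by positivity), Real.log_pow, Real.log_pow]
    push_cast; ring
  have hml1 : Tendsto (fun m : ℝ × ℝ => m.1 * Real.log (Q ^ 2 / m.1 ^ 2)) f (nhds 0) :=
    hlog0.comp hm1'
  have hml2 : Tendsto (fun m : ℝ × ℝ => m.2 * Real.log (Q ^ 2 / m.2 ^ 2)) f (nhds 0) :=
    hlog0.comp hm2'
  -- assemble the seven terms
  have hT1 : Tendsto (fun m : ℝ × ℝ =>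
      qp * (ξ' * Q ^ 2 / (Q ^ 2 + (m.1 + m.2) ^ 2)) ^ 2 * (triangleFn (Q ^ 2 * (1 / (ξ' * Q ^ 2 / (Q ^ 2 + (m.1 + m.2) ^ 2)) - 1)) (m.2 ^ 2) (m.1 ^ 2) / (Q ^ 2 * (1 / (ξ' * Q ^ 2 / (Q ^ 2 + (m.1 + m.2) ^ 2)) - 1))) * ((Q ^ 2 * (1 / (ξ' * Q ^ 2 / (Q ^ 2 + (m.1 + m.2) ^ 2)) - 1)) / Q ^ 2) * (1 + (m.2 ^ 2 - 3 * m.1 ^ 2) / Q ^ 2))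
      f (nhds (qp * (ξ' * (1 - ξ')))) := by
    have h : Tendsto (fun m : ℝ × ℝ =>
        qp * (ξ' * Q ^ 2 / (Q ^ 2 + (m.1 + m.2) ^ 2)) ^ 2 * (triangleFn (Q ^ 2 * (1 / (ξ' * Q ^ 2 / (Q ^ 2 + (m.1 + m.2) ^ 2)) - 1)) (m.2 ^ 2) (m.1 ^ 2) / (Q ^ 2 * (1 / (ξ' * Q ^ 2 / (Q ^ 2 + (m.1 + m.2) ^ 2)) - 1))) * ((Q ^ 2 * (1 / (ξ' * Q ^ 2 / (Q ^ 2 + (m.1 + m.2) ^ 2)) - 1)) / Q ^ 2) * (1 + (m.2 ^ 2 - 3 * m.1 ^ 2) / Q ^ 2)) f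
        (nhds (qp * ξ' ^ 2 * 1 * (s₀ / Q ^ 2) * (1 + ((0:ℝ) ^ 2 - 3 * (0:ℝ) ^ 2) / Q ^ 2))) :=
      (((tendsto_const_nhds.mul (hxh.pow 2)).mul hζ₂).mul (hsh.div_const (Q ^ 2))).mul
      (tendsto_const_nhds.add (((hm2.pow 2).sub ((hm1.pow 2).const_mul (3:ℝ))).div_const (Q ^ 2)))
    have e : qp * ξ' ^ 2 * 1 * (s₀ / Q ^ 2) * (1 + ((0:ℝ) ^ 2 - 3 * (0:ℝ) ^ 2) / Q ^ 2)
        = qp * (ξ' * (1 - ξ')) := by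
      rw [hratio]; field_simp; ring
    rwa [e] at h
  have hT2 : Tendsto (fun m : ℝ × ℝ =>
      qp * (ξ' * Q ^ 2 / (Q ^ 2 + (m.1 + m.2) ^ 2)) ^ 2 * (triangleFn (Q ^ 2 * (1 / (ξ' * Q ^ 2 / (Q ^ 2 + (m.1 + m.2) ^ 2)) - 1)) (m.2 ^ 2) (m.1 ^ 2) / (Q ^ 2 * (1 / (ξ' * Q ^ 2 / (Q ^ 2 + (m.1 + m.2) ^ 2)) - 1))) * ((Q ^ 2 * (1 / (ξ' * Q ^ 2 / (Q ^ 2 + (m.1 + m.2) ^ 2)) - 1)) / Q ^ 2) * (1 + (m.1 ^ 2 - 3 * m.2 ^ 2) / Q ^ 2))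
      f (nhds (qp * (ξ' * (1 - ξ')))) := by
    have h : Tendsto (fun m : ℝ × ℝ =>
        qp * (ξ' * Q ^ 2 / (Q ^ 2 + (m.1 + m.2) ^ 2)) ^ 2 * (triangleFn (Q ^ 2 * (1 / (ξ' * Q ^ 2 / (Q ^ 2 + (m.1 + m.2) ^ 2)) - 1)) (m.2 ^ 2) (m.1 ^ 2) / (Q ^ 2 * (1 / (ξ' * Q ^ 2 / (Q ^ 2 + (m.1 + m.2) ^ 2)) - 1))) * ((Q ^ 2 * (1 / (ξ' * Q ^ 2 / (Q ^ 2 + (m.1 + m.2) ^ 2)) - 1)) / Q ^ 2) * (1 + (m.1 ^ 2 - 3 * m.2 ^ 2) / Q ^ 2)) f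
        (nhds (qp * ξ' ^ 2 * 1 * (s₀ / Q ^ 2) * (1 + ((0:ℝ) ^ 2 - 3 * (0:ℝ) ^ 2) / Q ^ 2))) :=
      (((tendsto_const_nhds.mul (hxh.pow 2)).mul hζ₂).mul (hsh.div_const (Q ^ 2))).mul
      (tendsto_const_nhds.add (((hm1.pow 2).sub ((hm2.pow 2).const_mul (3:ℝ))).div_const (Q ^ 2)))
    have e : qp * ξ' ^ 2 * 1 * (s₀ / Q ^ 2) * (1 + ((0:ℝ) ^ 2 - 3 * (0:ℝ) ^ 2) / Q ^ 2)
        = qp * (ξ' * (1 - ξ')) := by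
      rw [hratio]; field_simp; ring
    rwa [e] at h
  have hT3 : Tendsto (fun m : ℝ × ℝ =>
      C5gf Q qp (ξ' * Q ^ 2 / (Q ^ 2 + (m.1 + m.2) ^ 2)) m.1 m.2 * (2 * Real.log (1 - (((1 + (m.2 ^ 2 - m.1 ^ 2) / (Q ^ 2 * (1 / (ξ' * Q ^ 2 / (Q ^ 2 + (m.1 + m.2) ^ 2)) - 1))) - triangleFn (Q ^ 2 * (1 / (ξ' * Q ^ 2 / (Q ^ 2 + (m.1 + m.2) ^ 2)) - 1)) (m.2 ^ 2) (m.1 ^ 2) / (Q ^ 2 * (1 / (ξ' * Q ^ 2 / (Q ^ 2 + (m.1 + m.2) ^ 2)) - 1))) / 2)) + Real.log ((Q ^ 2 * (1 / (ξ' * Q ^ 2 / (Q ^ 2 + (m.1 + m.2) ^ 2)) - 1)) / Q ^ 2)))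
      f (nhds (qp * Pqg ξ' * Real.log ((1 - ξ') / ξ'))) := by
    have h := hC5a.mul ((hlog1m.const_mul (2:ℝ)).add hlogsh)
    rwa [show (2:ℝ) * 0 + Real.log ((1 - ξ') / ξ') = Real.log ((1 - ξ') / ξ') from by ring] at h
  have hT4 : Tendsto (fun m : ℝ × ℝ =>
      C5gf Q qp (ξ' * Q ^ 2 / (Q ^ 2 + (m.1 + m.2) ^ 2)) m.2 m.1 * (2 * Real.log (((1 + (m.2 ^ 2 - m.1 ^ 2) / (Q ^ 2 * (1 / (ξ' * Q ^ 2 / (Q ^ 2 + (m.1 + m.2) ^ 2)) - 1))) + triangleFn (Q ^ 2 * (1 / (ξ' * Q ^ 2 / (Q ^ 2 + (m.1 + m.2) ^ 2)) - 1)) (m.2 ^ 2) (m.1 ^ 2) / (Q ^ 2 * (1 / (ξ' * Q ^ 2 / (Q ^ 2 + (m.1 + m.2) ^ 2)) - 1))) / 2) + Real.log ((Q ^ 2 * (1 / (ξ' * Q ^ 2 / (Q ^ 2 + (m.1 + m.2) ^ 2)) - 1)) / Q ^ 2)))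
      f (nhds (qp * Pqg ξ' * Real.log ((1 - ξ') / ξ'))) := by
    have h := hC5b.mul ((hlogp.const_mul (2:ℝ)).add hlogsh)
    rwa [show (2:ℝ) * 0 + Real.log ((1 - ξ') / ξ') = Real.log ((1 - ξ') / ξ') from by ring] at h
  have hT5 : Tendsto (fun m : ℝ × ℝ =>
      qp * Ggf Q ξ' m.1 m.2 * (m.1 * Real.log (Q ^ 2 / m.1 ^ 2))) f (nhds 0) := by
    have h := (hG1.const_mul qp).mul hml1
    rwa [mul_zero] at h
  have hT6 : Tendsto (fun m : ℝ × ℝ =>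
      qp * Ggf Q ξ' m.2 m.1 * (m.2 * Real.log (Q ^ 2 / m.2 ^ 2))) f (nhds 0) := by
    have h := (hG2.const_mul qp).mul hml2
    rwa [mul_zero] at h
  have hT7 : Tendsto (fun m : ℝ × ℝ =>
      -qp * (6 * (ξ' * Q ^ 2 / (Q ^ 2 + (m.1 + m.2) ^ 2)) ^ 2 - 6 * (ξ' * Q ^ 2 / (Q ^ 2 + (m.1 + m.2) ^ 2)) + 1) * (triangleFn (Q ^ 2 * (1 / (ξ' * Q ^ 2 / (Q ^ 2 + (m.1 + m.2) ^ 2)) - 1)) (m.2 ^ 2) (m.1 ^ 2) / (Q ^ 2 * (1 / (ξ' * Q ^ 2 / (Q ^ 2 + (m.1 + m.2) ^ 2)) - 1))))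
      f (nhds (-qp * (6 * ξ' ^ 2 - 6 * ξ' + 1))) := by
    have h : Tendsto (fun m : ℝ × ℝ =>
        -qp * (6 * (ξ' * Q ^ 2 / (Q ^ 2 + (m.1 + m.2) ^ 2)) ^ 2 - 6 * (ξ' * Q ^ 2 / (Q ^ 2 + (m.1 + m.2) ^ 2)) + 1) * (triangleFn (Q ^ 2 * (1 / (ξ' * Q ^ 2 / (Q ^ 2 + (m.1 + m.2) ^ 2)) - 1)) (m.2 ^ 2) (m.1 ^ 2) / (Q ^ 2 * (1 / (ξ' * Q ^ 2 / (Q ^ 2 + (m.1 + m.2) ^ 2)) - 1)))) f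
        (nhds (-qp * (6 * ξ' ^ 2 - 6 * ξ' + 1) * 1)) :=
      (((((hxh.pow 2).const_mul (6:ℝ)).sub (hxh.const_mul (6:ℝ))).add
        tendsto_const_nhds).const_mul (-qp)).mul hζ₂
    rwa [mul_one] at h
  have htot := ((((((hT1.add hT2).add hT3).add hT4).add hT5).add hT6).add hT7)
  have efin : qp * (-1 + 8 * ξ' * (1 - ξ') + ((1 - ξ') ^ 2 + ξ' ^ 2) * Real.log ((1 - ξ') / ξ'))
      = qp * (ξ' * (1 - ξ')) + qp * (ξ' * (1 - ξ'))
        + qp * Pqg ξ' * Real.log ((1 - ξ') / ξ') + qp * Pqg ξ' * Real.log ((1 - ξ') / ξ')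
        + 0 + 0 + -qp * (6 * ξ' ^ 2 - 6 * ξ' + 1) := by
    unfold Pqg; ring
  rw [efin]
  show Tendsto (fun m : ℝ × ℝ => PhiF Q ξ' qp m.1 m.2) f _
  unfold PhiF
  exact htot

/-- The ACOT-subtracted massive boson–gluon-fusion `F₅` Wilson coefficient converges,
in the joint massless limit `(m₁,m₂) → (0⁺,0⁺)`, to `q₊` times the massless MS-bar
gluon coefficient function
`C_{G,5}^{(1)}(ξ′) = −1 + 8ξ′(1−ξ′) + ((1−ξ′)² + ξ′²)·ln((1−ξ′)/ξ′)`. -/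
theorem gf_F5_massless_limit (Q ξ' qp : ℝ) (hQ : 0 < Q) (h0 : 0 < ξ') (h1 : ξ' < 1) :
    Tendsto (fun m : ℝ × ℝ =>
        H5gf Q ξ' qp m.1 m.2
          - qp * Pqg ξ' * (Real.log (Q ^ 2 / m.1 ^ 2) + Real.log (Q ^ 2 / m.2 ^ 2)))
      (nhdsWithin (0, 0) (Set.Ioi 0 ×ˢ Set.Ioi 0))
      (nhds (qp * (-1 + 8 * ξ' * (1 - ξ')
        + ((1 - ξ') ^ 2 + ξ' ^ 2) * Real.log ((1 - ξ') / ξ')))) := by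
  have h := tendsto_PhiF Q ξ' qp hQ h0 h1
  apply h.congr'
  filter_upwards [self_mem_nhdsWithin] with m hm
  exact (pointwise_eq Q ξ' qp m.1 m.2 hQ h0 h1 hm.1 hm.2).symm
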